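/- arXiv:2408.02410 — 12 statements merged into one kernel-verified Lean document; each statement's English description precedes it below -/
import Mathlib

section
/- Let s1, s2 be real numbers with 0 ≤ s1 ≤ s2 ≤ 1 and s2 > 0, and set q_crit = (2·s1 − s2)/(s1 + s2). Then for every fixed opponent strategy q ∈ [0,1]: if q < q_crit, the function p ↦ Π(p,q) on [0,1] attains its maximum uniquely at p = 1; if q > q_crit, it attains its maximum uniquely at p = 0; and if q = q_crit, the function p ↦ Π(p,q) is constant on [0,1]. -/
/-- Expected payoff of a responder playing `p` against a responder playing `q`
in the two-proposer–two-responder Ultimatum Game with offers `s1 ≤ s2`. -/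
noncomputable def Pi2 (s1 s2 p q : ℝ) : ℝ :=
  s1 * p * (1 - q / 2) + s2 * (1 - p) * (1 + q) / 2

/-! The payoff is affine in `p`, with slope `(2 s1 - s2 - q (s1 + s2)) / 2`; the sign of that
slope, i.e. the position of `q` relative to `(2 s1 - s2) / (s1 + s2)`, decides which endpoint
of `[0, 1]` is the best response. -/

section

variable {s1 s2 q : ℝ}

theorem Pi2_sub_Pi2 (s1 s2 p p' q : ℝ) :
    Pi2 s1 s2 p q - Pi2 s1 s2 p' q = (p - p') * (2 * s1 - s2 - q * (s1 + s2)) / 2 := by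
  unfold Pi2; ring

theorem Pi2_lt_Pi2_one (hq : q * (s1 + s2) < 2 * s1 - s2) {p : ℝ} (hp : p < 1) :
    Pi2 s1 s2 p q < Pi2 s1 s2 1 q := by
  have h := Pi2_sub_Pi2 s1 s2 p 1 q
  nlinarith [mul_pos (sub_pos.2 hp) (sub_pos.2 hq)]

theorem Pi2_lt_Pi2_zero (hq : 2 * s1 - s2 < q * (s1 + s2)) {p : ℝ} (hp : 0 < p) :
    Pi2 s1 s2 p q < Pi2 s1 s2 0 q := by
  have h := Pi2_sub_Pi2 s1 s2 p 0 q
  nlinarith [mul_pos hp (sub_pos.2 hq)]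

theorem Pi2_eq_Pi2 (hq : q * (s1 + s2) = 2 * s1 - s2) (p p' : ℝ) :
    Pi2 s1 s2 p q = Pi2 s1 s2 p' q := by
  have h := Pi2_sub_Pi2 s1 s2 p p' q
  rw [hq, sub_self, mul_zero, zero_div] at h
  exact sub_eq_zero.1 h

end

theorem stmt0_general (s1 s2 : ℝ) (h0 : 0 ≤ s1) (hs2 : 0 < s2)
    (qcrit : ℝ) (hqc : qcrit = (2 * s1 - s2) / (s1 + s2)) :
    ∀ q ∈ Set.Icc (0:ℝ) 1,
      (q < qcrit → ∀ p ∈ Set.Icc (0:ℝ) 1, p ≠ 1 → Pi2 s1 s2 p q < Pi2 s1 s2 1 q) ∧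
      (qcrit < q → ∀ p ∈ Set.Icc (0:ℝ) 1, p ≠ 0 → Pi2 s1 s2 p q < Pi2 s1 s2 0 q) ∧
      (q = qcrit → ∀ p ∈ Set.Icc (0:ℝ) 1, ∀ p' ∈ Set.Icc (0:ℝ) 1,
        Pi2 s1 s2 p q = Pi2 s1 s2 p' q) := by
  have hS : 0 < s1 + s2 := by linarith
  subst hqc
  intro q _
  refine ⟨fun hq p hp hp1 => ?_, fun hq p hp hp0 => ?_, fun hq p _ p' _ => ?_⟩
  · exact Pi2_lt_Pi2_one ((lt_div_iff₀ hS).1 hq) (hp.2.lt_of_ne hp1)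
  · exact Pi2_lt_Pi2_zero ((div_lt_iff₀ hS).1 hq) (hp.1.lt_of_ne' hp0)
  · exact Pi2_eq_Pi2 ((eq_div_iff hS.ne').1 hq) p p'

theorem stmt0 (s1 s2 : ℝ) (h0 : 0 ≤ s1) (h12 : s1 ≤ s2) (h21 : s2 ≤ 1) (hs2 : 0 < s2)
    (qcrit : ℝ) (hqc : qcrit = (2 * s1 - s2) / (s1 + s2)) :
    ∀ q ∈ Set.Icc (0:ℝ) 1,
      (q < qcrit → ∀ p ∈ Set.Icc (0:ℝ) 1, p ≠ 1 → Pi2 s1 s2 p q < Pi2 s1 s2 1 q) ∧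
      (qcrit < q → ∀ p ∈ Set.Icc (0:ℝ) 1, p ≠ 0 → Pi2 s1 s2 p q < Pi2 s1 s2 0 q) ∧
      (q = qcrit → ∀ p ∈ Set.Icc (0:ℝ) 1, ∀ p' ∈ Set.Icc (0:ℝ) 1,
        Pi2 s1 s2 p q = Pi2 s1 s2 p' q) :=
  stmt0_general s1 s2 h0 hs2 qcrit hqc
end

section
/- Let s1, s2 be real numbers with 0 ≤ s1 ≤ s2 ≤ 1 and s2 > 0, and set p* = max{(2·s1 − s2)/(s1 + s2), 0}. Then p* is an evolutionarily stable strategy of the responder game: for every p ∈ [0,1] with p ≠ p*, either Π(p,p*) < Π(p*,p*), or Π(p,p*) = Π(p*,p*) and Π(p,p) < Π(p*,p). -/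
theorem stmt1 (s1 s2 : ℝ) (h0 : 0 ≤ s1) (h12 : s1 ≤ s2) (h21 : s2 ≤ 1) (hs2 : 0 < s2)
    (pstar : ℝ) (hps : pstar = max ((2 * s1 - s2) / (s1 + s2)) 0) :
    ∀ p ∈ Set.Icc (0:ℝ) 1, p ≠ pstar →
      Pi2 s1 s2 p pstar < Pi2 s1 s2 pstar pstar ∨
      (Pi2 s1 s2 p pstar = Pi2 s1 s2 pstar pstar ∧
        Pi2 s1 s2 p p < Pi2 s1 s2 pstar p) := by
  have hA : 0 < s1 + s2 := by linarith
  intro p hp hne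
  obtain ⟨hp0, hp1⟩ := hp
  rcases le_or_gt (2 * s1) s2 with hle | hlt
  · -- pstar = 0
    have hps0 : pstar = 0 := by
      rw [hps, max_eq_right]
      exact div_nonpos_of_nonpos_of_nonneg (by linarith) (le_of_lt hA)
    subst hps0
    have hppos : 0 < p := lt_of_le_of_ne hp0 (Ne.symm hne)
    rcases lt_or_eq_of_le hle with hlt' | heq
    · left
      simp only [Pi2]
      nlinarith
    · right
      constructor
      · simp only [Pi2]; nlinarith
      · simp only [Pi2]; nlinarith [sq_nonneg p, mul_pos (mul_pos hppos hppos) hA]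
  · -- pstar = (2 s1 - s2)/(s1 + s2)
    have hpsv : pstar = (2 * s1 - s2) / (s1 + s2) := by
      rw [hps, max_eq_left]
      exact div_nonneg (by linarith) (le_of_lt hA)
    have hkey : pstar * (s1 + s2) = 2 * s1 - s2 := by
      rw [hpsv]; field_simp
    right
    have hsq : 0 < (p - pstar) ^ 2 := by
      have : p - pstar ≠ 0 := sub_ne_zero.mpr hne
      positivity
    constructor
    · simp only [Pi2]
      linear_combination ((pstar - p) / 2) * hkey
    · have hid : Pi2 s1 s2 p p - Pi2 s1 s2 pstar p
          = -(p - pstar) ^ 2 * (s1 + s2) / 2 := by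
        simp only [Pi2]
        linear_combination ((pstar - p) / 2) * hkey
      nlinarith [mul_pos hsq hA]
end

section
/- Let s1, s2 be real numbers with 0 ≤ s1 ≤ s2 ≤ 1 and s2 > 0. If p0 ∈ [0,1] is an evolutionarily stable strategy of the responder game, then p0 = max{(2·s1 − s2)/(s1 + s2), 0}; hence the ESS is unique. -/
theorem stmt2 (s1 s2 : ℝ) (h0 : 0 ≤ s1) (h12 : s1 ≤ s2) (h21 : s2 ≤ 1) (hs2 : 0 < s2)
    (p0 : ℝ) (hp0 : p0 ∈ Set.Icc (0:ℝ) 1)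
    (hESS : ∀ p ∈ Set.Icc (0:ℝ) 1, p ≠ p0 →
      Pi2 s1 s2 p p0 < Pi2 s1 s2 p0 p0 ∨
      (Pi2 s1 s2 p p0 = Pi2 s1 s2 p0 p0 ∧ Pi2 s1 s2 p p < Pi2 s1 s2 p0 p)) :
    p0 = max ((2 * s1 - s2) / (s1 + s2)) 0 := by
  obtain ⟨hp0l, hp0r⟩ := hp0
  have hsum : 0 < s1 + s2 := by linarith
  set A : ℝ := s1 * (1 - p0 / 2) - s2 * (1 + p0) / 2 with hA
  have hlin : ∀ p : ℝ, Pi2 s1 s2 p p0 - Pi2 s1 s2 p0 p0 = A * (p - p0) := by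
    intro p; simp only [Pi2, hA]; ring
  rcases lt_trichotomy A 0 with hAneg | hAzero | hApos
  · -- A < 0 : p0 must be 0
    have hp00 : p0 = 0 := by
      by_contra h
      have hp0pos : 0 < p0 := lt_of_le_of_ne hp0l (Ne.symm h)
      have := hESS 0 ⟨le_refl 0, by norm_num⟩ (fun h' => h (h'.symm))
      have hgt : Pi2 s1 s2 p0 p0 < Pi2 s1 s2 0 p0 := by
        have := hlin 0
        nlinarith
      rcases this with h1 | ⟨h1, _⟩ <;> linarith
    subst hp00
    have h2s : 2 * s1 - s2 < 0 := by
      simp only [hA] at hAneg; linarith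
    have : (2 * s1 - s2) / (s1 + s2) < 0 := div_neg_of_neg_of_pos h2s hsum
    rw [max_eq_right this.le]
  · -- A = 0 : p0 = (2s1 - s2)/(s1+s2)
    have hval : p0 = (2 * s1 - s2) / (s1 + s2) := by
      rw [eq_div_iff hsum.ne']
      simp only [hA] at hAzero
      nlinarith
    rw [max_eq_left (by rw [← hval]; exact hp0l), hval]
  · -- A > 0 : impossible
    exfalso
    have hp01 : p0 = 1 := by
      by_contra h
      have hp0lt : p0 < 1 := lt_of_le_of_ne hp0r h
      have := hESS 1 ⟨by norm_num, le_refl 1⟩ (fun h' => h h'.symm)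
      have hgt : Pi2 s1 s2 p0 p0 < Pi2 s1 s2 1 p0 := by
        have := hlin 1
        nlinarith
      rcases this with h1 | ⟨h1, _⟩ <;> linarith
    subst hp01
    simp only [hA] at hApos
    nlinarith
end

section
/- Let s1, s2 be real numbers with 0 < s1 ≤ s2 < 2·s1 and s2 ≤ 1, and set q_c = (2·s1 − s2)/(s1 + s2). A pair (p,q) ∈ [0,1]² is a Nash equilibrium of the responder subgame (i.e. Π(p,q) ≥ Π(p',q) for all p' ∈ [0,1] and Π(q,p) ≥ Π(q',p) for all q' ∈ [0,1]) if and only if (p,q) ∈ {(q_c, q_c), (0,1), (1,0)}. -/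
theorem stmt3 (s1 s2 : ℝ) (h1 : 0 < s1) (h12 : s1 ≤ s2) (h2 : s2 < 2 * s1) (h21 : s2 ≤ 1)
    (qc : ℝ) (hqc : qc = (2 * s1 - s2) / (s1 + s2)) :
    ∀ p ∈ Set.Icc (0:ℝ) 1, ∀ q ∈ Set.Icc (0:ℝ) 1,
      ((∀ p' ∈ Set.Icc (0:ℝ) 1, Pi2 s1 s2 p' q ≤ Pi2 s1 s2 p q) ∧
       (∀ q' ∈ Set.Icc (0:ℝ) 1, Pi2 s1 s2 q' p ≤ Pi2 s1 s2 q p)) ↔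
      ((p = qc ∧ q = qc) ∨ (p = 0 ∧ q = 1) ∨ (p = 1 ∧ q = 0)) := by
  have hs : 0 < s1 + s2 := by linarith
  have hqc0 : 0 < qc := by
    rw [hqc]; exact div_pos (by linarith) hs
  have hqc1 : qc < 1 := by
    rw [hqc, div_lt_one hs]; linarith
  have hA : ∀ p q : ℝ, Pi2 s1 s2 p q = (s1 + s2) / 2 * (qc - q) * p + s2 * (1 + q) / 2 := by
    intro p q
    rw [hqc, Pi2]
    field_simp
    ring
  have br : ∀ x ∈ Set.Icc (0:ℝ) 1, ∀ y : ℝ,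
      ((∀ x' ∈ Set.Icc (0:ℝ) 1, Pi2 s1 s2 x' y ≤ Pi2 s1 s2 x y) ↔
        ((y < qc → x = 1) ∧ (qc < y → x = 0))) := by
    intro x hx y
    constructor
    · intro h
      constructor
      · intro hy
        have h1' := h 1 ⟨zero_le_one, le_refl 1⟩
        rw [hA, hA] at h1'
        nlinarith [hx.2, mul_pos (half_pos hs) (sub_pos.mpr hy)]
      · intro hy
        have h0' := h 0 ⟨le_refl 0, zero_le_one⟩
        rw [hA, hA] at h0'
        nlinarith [hx.1, mul_pos (half_pos hs) (sub_pos.mpr hy)]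
    · rintro ⟨hlt, hgt⟩ x' hx'
      rw [hA, hA]
      rcases lt_trichotomy y qc with h | h | h
      · have := hlt h; subst this
        nlinarith [hx'.2, mul_pos (half_pos hs) (sub_pos.mpr h)]
      · subst h; simp
      · have := hgt h; subst this
        nlinarith [hx'.1, mul_pos (half_pos hs) (sub_pos.mpr h)]
  intro p hp q hq
  rw [br p hp q, br q hq p]
  constructor
  · rintro ⟨⟨hpq1, hpq0⟩, ⟨hqp1, hqp0⟩⟩
    rcases lt_trichotomy p qc with h | h | h
    · have hq1 : q = 1 := hqp1 h
      have hp0 : p = 0 := hpq0 (by rw [hq1]; exact hqc1)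
      exact Or.inr (Or.inl ⟨hp0, hq1⟩)
    · left
      refine ⟨h.symm ▸ rfl, ?_⟩
      rcases lt_trichotomy q qc with h' | h' | h'
      · exact absurd (hpq1 h') (fun he => by rw [he] at h; linarith)
      · exact h'
      · exact absurd (hpq0 h') (fun he => by rw [he] at h; linarith)
    · have hq0 : q = 0 := hqp0 h
      have hp1 : p = 1 := hpq1 (by rw [hq0]; exact hqc0)
      exact Or.inr (Or.inr ⟨hp1, hq0⟩)
  · rintro (⟨hp', hq'⟩ | ⟨hp', hq'⟩ | ⟨hp', hq'⟩) <;> subst hp' <;> subst hq'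
    · exact ⟨⟨fun h => absurd h (lt_irrefl _), fun h => absurd h (lt_irrefl _)⟩,
            ⟨fun h => absurd h (lt_irrefl _), fun h => absurd h (lt_irrefl _)⟩⟩
    · exact ⟨⟨fun h => absurd h (by linarith), fun _ => rfl⟩,
            ⟨fun _ => rfl, fun h => absurd h (by linarith)⟩⟩
    · exact ⟨⟨fun _ => rfl, fun h => absurd h (by linarith)⟩,
            ⟨fun h => absurd h (by linarith), fun _ => rfl⟩⟩
end

section
/- Let s1, s2 be real numbers with 0 ≤ s1, s2 ≤ 1 and 2·s1 < s2. Then (p,q) = (0,0) is the unique Nash equilibrium of the responder subgame, i.e. the unique pair (p,q) ∈ [0,1]² with Π(p,q) ≥ Π(p',q) for all p' ∈ [0,1] and Π(q,p) ≥ Π(q',p) for all q' ∈ [0,1]. -/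
theorem stmt4 (s1 s2 : ℝ) (h10 : 0 ≤ s1) (h11 : s1 ≤ 1) (h20 : 0 ≤ s2) (h21 : s2 ≤ 1)
    (h : 2 * s1 < s2) :
    ((∀ p' ∈ Set.Icc (0:ℝ) 1, Pi2 s1 s2 p' 0 ≤ Pi2 s1 s2 0 0) ∧
     (∀ q' ∈ Set.Icc (0:ℝ) 1, Pi2 s1 s2 q' 0 ≤ Pi2 s1 s2 0 0)) ∧
    (∀ p ∈ Set.Icc (0:ℝ) 1, ∀ q ∈ Set.Icc (0:ℝ) 1,
      ((∀ p' ∈ Set.Icc (0:ℝ) 1, Pi2 s1 s2 p' q ≤ Pi2 s1 s2 p q) ∧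
       (∀ q' ∈ Set.Icc (0:ℝ) 1, Pi2 s1 s2 q' p ≤ Pi2 s1 s2 q p)) →
      p = 0 ∧ q = 0) := by
  have key : ∀ x ∈ Set.Icc (0:ℝ) 1, ∀ y ∈ Set.Icc (0:ℝ) 1,
      Pi2 s1 s2 0 y ≤ Pi2 s1 s2 x y → x = 0 := by
    rintro x ⟨hx0, hx1⟩ y ⟨hy0, hy1⟩ hle
    simp only [Pi2] at hle
    -- coefficient c = s1*(1-y/2) - s2*(1+y)/2 < 0, and x*c ≥ 0 ⇒ x = 0
    by_contra hx
    have hx' : 0 < x := lt_of_le_of_ne hx0 (Ne.symm hx)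
    nlinarith [mul_pos hx' (sub_pos.mpr h), mul_nonneg (mul_nonneg hx'.le h20) hy0,
      mul_nonneg (mul_nonneg hx'.le h10) hy0]
  constructor
  · constructor
    · rintro p' ⟨hp0, hp1⟩
      simp only [Pi2]
      nlinarith
    · rintro q' ⟨hq0, hq1⟩
      simp only [Pi2]
      nlinarith
  · rintro p hp q hq ⟨h1, h2⟩
    exact ⟨key p hp q hq (h1 0 (by norm_num)), key q hq p hp (h2 0 (by norm_num))⟩
end

section
/- Let s1 ∈ (0, 1/2] and s2 = 2·s1. Then for all p, q ∈ [0,1], Π(p,q) = s1·(1 + q − (3/2)·p·q); consequently the strategy p = 0 weakly dominates: Π(0,q) ≥ Π(p,q) for all p, q ∈ [0,1], with strict inequality whenever p > 0 and q > 0. -/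
theorem stmt5 (s1 : ℝ) (h1 : 0 < s1) (h2 : s1 ≤ 1/2) (s2 : ℝ) (hs2 : s2 = 2 * s1) :
    (∀ p ∈ Set.Icc (0:ℝ) 1, ∀ q ∈ Set.Icc (0:ℝ) 1,
      Pi2 s1 s2 p q = s1 * (1 + q - 3/2 * p * q)) ∧
    (∀ p ∈ Set.Icc (0:ℝ) 1, ∀ q ∈ Set.Icc (0:ℝ) 1,
      Pi2 s1 s2 p q ≤ Pi2 s1 s2 0 q) ∧
    (∀ p ∈ Set.Icc (0:ℝ) 1, ∀ q ∈ Set.Icc (0:ℝ) 1,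
      0 < p → 0 < q → Pi2 s1 s2 p q < Pi2 s1 s2 0 q) := by
  subst hs2
  refine ⟨fun p _ q _ => by unfold Pi2; ring, ?_, ?_⟩
  · intro p hp q hq
    unfold Pi2
    nlinarith [hp.1, hq.1, mul_nonneg hp.1 hq.1]
  · intro p hp q hq hp0 hq0
    unfold Pi2
    nlinarith [mul_pos hp0 hq0]
end

section
/- Let K, L ≥ 2 be integers and let 0 < s1 ≤ s2 ≤ … ≤ sK ≤ 1 be offers. Define f0inv : [1,∞) → [0,1] by f0inv(y) = f_L^{−1}(y) for y ∈ [1, L] and f0inv(y) = 0 for y ≥ L, and define h : [0,1] → ℝ by h(p) = p + Σ_{i=1}^{K−1} f0inv((sK/si)·f_L(p)). Then h is continuous and strictly increasing on [0,1], h(0) = 0, h(1) ≥ 1, and consequently there exists a unique p* ∈ (0,1] with h(p*) = 1. -/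
/-!
Writing `f_L(x) = ∑_{j<L} (1-x)^j` shows at once that `f_L` is continuous and strictly
decreasing on `[0,1]` with values in `[1,L]`. A continuous bijection from the compact `[0,1]`
is a homeomorphism, so `f_L⁻¹` is continuous and decreasing on `[1,L]`, and `f0inv` is
`f_L⁻¹ ∘ min(·, L)` because `f_L⁻¹(L) = 0`. Each summand of `h` is therefore a decreasing
continuous function of the decreasing continuous `(s_K/s_i) f_L(p) ≥ 1`, hence increasing and
continuous, and it vanishes at `p = 0`, where its argument is at least `L`. So `h` is the
identity plus nondecreasing continuous terms; the intermediate value theorem gives `p*`.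
-/

open Set

noncomputable def fL (L : ℕ) (x : ℝ) : ℝ :=
  if x = 0 then (L:ℝ) else (1 - (1-x)^L) / x

theorem Set.InvOn.continuousOn_of_isCompact {X Y : Type*} [TopologicalSpace X]
    [TopologicalSpace Y] [T2Space Y] {f : X → Y} {g : Y → X} {s : Set X} {t : Set Y}
    (hs : IsCompact s) (hf : ContinuousOn f s) (hst : MapsTo f s t) (hts : MapsTo g t s)
    (hinv : InvOn g f s t) : ContinuousOn g t := by
  have : CompactSpace s := isCompact_iff_compactSpace.mp hs
  let e : s ≃ t :=
    { toFun := hst.restrict f s t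
      invFun := hts.restrict g t s
      left_inv := fun x => Subtype.ext (hinv.1 x.2)
      right_inv := fun y => Subtype.ext (hinv.2 y.2) }
  have he : Continuous e := hf.mapsToRestrict hst
  rw [continuousOn_iff_continuous_domRestrict]
  exact continuous_subtype_val.comp (he.homeoOfEquivCompactToT2 (f := e)).symm.continuous

theorem StrictAntiOn.antitoneOn_of_rightInvOn {α β : Type*} [LinearOrder α] [Preorder β]
    {f : α → β} {g : β → α} {s : Set α} {t : Set β} (hf : StrictAntiOn f s)
    (hts : MapsTo g t s) (hinv : RightInvOn g f t) : AntitoneOn g t := by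
  intro a ha b hb hab
  by_contra! hlt
  have := hf (hts ha) (hts hb) hlt
  rw [hinv ha, hinv hb] at this
  exact this.not_ge hab

theorem StrictMonoOn.id_add_sum {ι : Type*} (t : Finset ι) {g : ι → ℝ → ℝ} {S : Set ℝ}
    (hg : ∀ i ∈ t, MonotoneOn (g i) S) : StrictMonoOn (fun p => p + ∑ i ∈ t, g i p) S :=
  fun _ hp _ hq hpq =>
    add_lt_add_of_lt_of_le hpq (Finset.sum_le_sum fun i hi => hg i hi hp hq hpq.le)

theorem StrictMonoOn.existsUnique_mem_Ioc {f : ℝ → ℝ} {a b y : ℝ} (hab : a ≤ b)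
    (hcont : ContinuousOn f (Icc a b)) (hmono : StrictMonoOn f (Icc a b))
    (hy : y ∈ Ioc (f a) (f b)) : ∃! p, p ∈ Ioc a b ∧ f p = y := by
  rw [← hcont.image_Ioc_of_strictMonoOn hab hmono] at hy
  obtain ⟨p, hp, rfl⟩ := hy
  exact ⟨p, ⟨hp, rfl⟩, fun q ⟨hq, hqp⟩ =>
    hmono.injOn (Ioc_subset_Icc_self hq) (Ioc_subset_Icc_self hp) hqp⟩

section fL

variable {L : ℕ}

theorem fL_eq_geom_sum (L : ℕ) (x : ℝ) : fL L x = ∑ j ∈ Finset.range L, (1-x)^j := by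
  unfold fL
  split_ifs with hx
  · simp [hx]
  · rw [div_eq_iff hx]
    linear_combination geom_sum_mul (1-x) L

theorem continuous_fL (L : ℕ) : Continuous (fL L) := by
  simp_rw [funext (fL_eq_geom_sum L)]
  fun_prop

theorem fL_zero (L : ℕ) : fL L 0 = L := if_pos rfl

theorem mapsTo_fL (hL : L ≠ 0) : MapsTo (fL L) (Icc 0 1) (Icc 1 L) := by
  intro x ⟨hx0, hx1⟩
  rw [fL_eq_geom_sum]
  constructor
  · calc (1:ℝ) = (1-x)^0 := (pow_zero _).symm
      _ ≤ ∑ j ∈ Finset.range L, (1-x)^j :=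
        Finset.single_le_sum (fun j _ => pow_nonneg (by linarith) j)
          (Finset.mem_range.2 (Nat.pos_of_ne_zero hL))
  · calc ∑ j ∈ Finset.range L, (1-x)^j ≤ ∑ _j ∈ Finset.range L, (1:ℝ) :=
          Finset.sum_le_sum fun j _ => pow_le_one₀ (by linarith) (by linarith)
      _ = L := by simp

theorem strictAntiOn_fL (hL : 2 ≤ L) : StrictAntiOn (fL L) (Icc 0 1) := by
  intro a _ b hb hab
  rw [fL_eq_geom_sum, fL_eq_geom_sum]
  apply Finset.sum_lt_sum
  · exact fun j _ => pow_le_pow_left₀ (by linarith [hb.2]) (by linarith) j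
  · exact ⟨1, Finset.mem_range.2 hL, by simpa using hab⟩

end fL

section inverse

variable {L : ℕ} {finv : ℝ → ℝ}

theorem finv_natCast_eq_zero (hinv : LeftInvOn finv (fL L) (Icc 0 1)) : finv L = 0 := by
  rw [← fL_zero L]
  exact hinv ⟨le_rfl, zero_le_one⟩

theorem ite_eq_finv_min (hinv : LeftInvOn finv (fL L) (Icc 0 1)) (y : ℝ) :
    (if y ≤ L then finv y else 0) = finv (min y L) := by
  split_ifs with hy
  · rw [min_eq_left hy]
  · rw [min_eq_right (le_of_not_ge hy), finv_natCast_eq_zero hinv]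

theorem finv_min_mul_fL_zero (hinv : LeftInvOn finv (fL L) (Icc 0 1)) {c : ℝ} (hc : 1 ≤ c) :
    finv (min (c * fL L 0) L) = 0 := by
  rw [fL_zero, min_eq_right (le_mul_of_one_le_left (Nat.cast_nonneg L) hc),
    finv_natCast_eq_zero hinv]

theorem mapsTo_min_Icc (hL : 1 ≤ L) : MapsTo (fun y => min y (L:ℝ)) (Ici 1) (Icc 1 L) :=
  fun _ hy => ⟨le_min hy (by exact_mod_cast hL), min_le_right _ _⟩

theorem continuousOn_finv_min (hL : 1 ≤ L) (hinv : InvOn finv (fL L) (Icc 0 1) (Icc 1 L))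
    (hmaps : MapsTo finv (Icc 1 L) (Icc 0 1)) :
    ContinuousOn (fun y => finv (min y L)) (Ici 1) :=
  (hinv.continuousOn_of_isCompact isCompact_Icc (continuous_fL L).continuousOn
    (mapsTo_fL (by omega)) hmaps).comp (by fun_prop) (mapsTo_min_Icc hL)

theorem antitoneOn_finv_min (hL : 2 ≤ L) (hinv : RightInvOn finv (fL L) (Icc 1 L))
    (hmaps : MapsTo finv (Icc 1 L) (Icc 0 1)) :
    AntitoneOn (fun y => finv (min y L)) (Ici 1) := fun _ ha _ hb hab =>
  (strictAntiOn_fL hL).antitoneOn_of_rightInvOn hmaps hinv (mapsTo_min_Icc (by omega) ha)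
    (mapsTo_min_Icc (by omega) hb) (min_le_min_right _ hab)

theorem mapsTo_mul_fL (hL : L ≠ 0) {c : ℝ} (hc : 1 ≤ c) :
    MapsTo (fun p => c * fL L p) (Icc 0 1) (Ici 1) := fun _ hp =>
  one_le_mul_of_one_le_of_one_le hc (mapsTo_fL hL hp).1

theorem antitoneOn_mul_fL (hL : 2 ≤ L) {c : ℝ} (hc : 0 ≤ c) :
    AntitoneOn (fun p => c * fL L p) (Icc 0 1) := fun _ ha _ hb hab =>
  mul_le_mul_of_nonneg_left ((strictAntiOn_fL hL).antitoneOn ha hb hab) hc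

theorem continuousOn_finv_min_mul_fL (hL : 1 ≤ L)
    (hinv : InvOn finv (fL L) (Icc 0 1) (Icc 1 L)) (hmaps : MapsTo finv (Icc 1 L) (Icc 0 1))
    {c : ℝ} (hc : 1 ≤ c) : ContinuousOn (fun p => finv (min (c * fL L p) L)) (Icc 0 1) :=
  (continuousOn_finv_min hL hinv hmaps).comp
    (continuous_const.mul (continuous_fL L)).continuousOn (mapsTo_mul_fL (by omega) hc)

theorem monotoneOn_finv_min_mul_fL (hL : 2 ≤ L) (hinv : RightInvOn finv (fL L) (Icc 1 L))
    (hmaps : MapsTo finv (Icc 1 L) (Icc 0 1)) {c : ℝ} (hc : 1 ≤ c) :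
    MonotoneOn (fun p => finv (min (c * fL L p) L)) (Icc 0 1) :=
  (antitoneOn_finv_min hL hinv hmaps).comp (antitoneOn_mul_fL hL (by linarith))
    (mapsTo_mul_fL (by omega) hc)

end inverse

theorem stmt10 (K L : ℕ) (hK : 2 ≤ K) (hL : 2 ≤ L)
    (s : Fin K → ℝ) (hmono : Monotone s)
    (hpos : 0 < s ⟨0, by omega⟩)
    -- `finv` is the inverse of the bijection `f_L : [0,1] → [1,L]`
    (finv : ℝ → ℝ)
    (hinv1 : ∀ x ∈ Set.Icc (0:ℝ) 1, finv (fL L x) = x)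
    (hinv2 : ∀ y ∈ Set.Icc (1:ℝ) (L:ℝ), fL L (finv y) = y)
    (hinv3 : Set.MapsTo finv (Set.Icc (1:ℝ) (L:ℝ)) (Set.Icc (0:ℝ) 1))
    -- `f0inv` extends `finv` by `0` above `L`
    (f0inv : ℝ → ℝ) (hf0 : ∀ y, f0inv y = if y ≤ (L:ℝ) then finv y else 0)
    (h : ℝ → ℝ)
    (hh : ∀ p, h p = p + ∑ i : Fin (K-1),
      f0inv ((s ⟨K-1, by omega⟩ / s (Fin.castLE (by omega) i)) * fL L p)) :
    ContinuousOn h (Set.Icc 0 1) ∧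
    StrictMonoOn h (Set.Icc 0 1) ∧
    h 0 = 0 ∧
    1 ≤ h 1 ∧
    ∃! p, p ∈ Set.Ioc (0:ℝ) 1 ∧ h p = 1 := by
  set c : Fin (K-1) → ℝ := fun i => s ⟨K-1, by omega⟩ / s (Fin.castLE (by omega) i)
  have hc : ∀ i, 1 ≤ c i := fun i =>
    (one_le_div (hpos.trans_le (hmono (by simp [Fin.le_def])))).2 (hmono (by simp [Fin.le_def]))
  have hh' : h = fun p => p + ∑ i, finv (min (c i * fL L p) L) := by
    funext p; simp only [hh, hf0, ite_eq_finv_min hinv1, c]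
  have hcont : ContinuousOn h (Icc 0 1) := by
    rw [hh']
    exact continuousOn_id.add <| continuousOn_finsetSum _ fun i _ =>
      continuousOn_finv_min_mul_fL (by omega) ⟨hinv1, hinv2⟩ hinv3 (hc i)
  have hstrict : StrictMonoOn h (Icc 0 1) := by
    rw [hh']
    exact StrictMonoOn.id_add_sum _ fun i _ => monotoneOn_finv_min_mul_fL hL hinv2 hinv3 (hc i)
  have h0 : h 0 = 0 := by
    simp only [hh', zero_add, finv_min_mul_fL_zero hinv1 (hc _), Finset.sum_const_zero]
  have h1 : 1 ≤ h 1 := by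
    rw [hh']
    refine le_add_of_nonneg_right (Finset.sum_nonneg fun i _ => ?_)
    have h1c : c i * fL L 1 ∈ Ici 1 := mapsTo_mul_fL (by omega) (hc i) ⟨zero_le_one, le_rfl⟩
    exact (hinv3 (mapsTo_min_Icc (by omega) h1c)).1
  refine ⟨hcont, hstrict, h0, h1, ?_⟩
  exact hstrict.existsUnique_mem_Ioc zero_le_one hcont (by rw [h0]; exact ⟨one_pos, h1⟩)
end

section
/- Let K, L ≥ 2 be integers and let s ∈ (0,1] be a common offer made by all K proposers. Then the unique evolutionarily stable strategy of the responder game is the uniform strategy p* with p*_i = 1/K for all i ∈ {1,…,K}. -/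
/-- `W_L(x) = (1 - (1-x)^L)/(L·x)` for `x ∈ (0,1]`, with `W_L(0) = 1`. -/
noncomputable def WL (L : ℕ) (x : ℝ) : ℝ :=
  if x = 0 then 1 else (1 - (1-x)^L) / ((L:ℝ) * x)

/-- The simplex of mixed strategies over `K` proposers. -/
def simplex (K : ℕ) : Set (Fin K → ℝ) :=
  {p | (∀ i, 0 ≤ p i) ∧ ∑ i, p i = 1}

/-- Expected payoff of a focal responder playing `p` when each of the other
`L-1` responders plays `q`, given offers `s`. -/
noncomputable def payoff (K L : ℕ) (s p q : Fin K → ℝ) : ℝ :=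
  ∑ i, s i * p i * WL L (q i)

/-- `pstar` is an evolutionarily stable strategy of the symmetric responder game. -/
def IsESS (K L : ℕ) (s pstar : Fin K → ℝ) : Prop :=
  pstar ∈ simplex K ∧ ∀ p ∈ simplex K, p ≠ pstar →
    payoff K L s p pstar < payoff K L s pstar pstar ∨
    (payoff K L s p pstar = payoff K L s pstar pstar ∧
      payoff K L s p p < payoff K L s pstar p)

/-!
With a common offer `s`, the payoff against the uniform strategy `u` is `s · W_L(1/K)` whatever
the focal responder plays, so every strategy is an alternative best reply to `u` and ESS is decided
by the second condition: `Π(p,p) < Π(u,p)`, i.e. `∑ᵢ (pᵢ - 1/K) W_L(pᵢ) < 0`. Since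
`W_L(x) = (1/L) ∑_{j<L} (1-x)^j` is strictly decreasing for `L ≥ 2`, subtracting the zero sum
`∑ᵢ (pᵢ - 1/K) W_L(1/K)` turns this into a sum of terms `(pᵢ - 1/K)(W_L(pᵢ) - W_L(1/K)) ≤ 0`,
one of them strictly negative when `p ≠ u`. The same inequality, applied to `p = p*`, shows that
no `p* ≠ u` can be an ESS: `u` invades it.
-/

open Finset

lemma StrictAntiOn.sub_mul_sub_nonpos {f : ℝ → ℝ} {S : Set ℝ} (hf : StrictAntiOn f S)
    {a b : ℝ} (ha : a ∈ S) (hb : b ∈ S) : (a - b) * (f a - f b) ≤ 0 := by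
  rcases lt_trichotomy a b with h | rfl | h
  · exact mul_nonpos_of_nonpos_of_nonneg (by linarith) (by linarith [hf ha hb h])
  · simp
  · exact mul_nonpos_of_nonneg_of_nonpos (by linarith) (by linarith [hf hb ha h])

lemma StrictAntiOn.sub_mul_sub_neg {f : ℝ → ℝ} {S : Set ℝ} (hf : StrictAntiOn f S)
    {a b : ℝ} (ha : a ∈ S) (hb : b ∈ S) (hab : a ≠ b) : (a - b) * (f a - f b) < 0 := by
  rcases hab.lt_or_gt with h | h
  · exact mul_neg_of_neg_of_pos (by linarith) (by linarith [hf ha hb h])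
  · exact mul_neg_of_pos_of_neg (by linarith) (by linarith [hf hb ha h])

lemma sum_sub_mul_neg_of_strictAntiOn {ι : Type*} [Fintype ι] {f : ℝ → ℝ} {S : Set ℝ}
    (hf : StrictAntiOn f S) {p : ι → ℝ} {c : ℝ} (hp : ∀ i, p i ∈ S) (hc : c ∈ S)
    (hmean : ∑ i, (p i - c) = 0) (hne : p ≠ fun _ => c) :
    ∑ i, (p i - c) * f (p i) < 0 := by
  have hshift : ∑ i, (p i - c) * f (p i) = ∑ i, (p i - c) * (f (p i) - f c) := by
    simp only [mul_sub, sum_sub_distrib, ← sum_mul, hmean, zero_mul, sub_zero]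
  obtain ⟨i, hi⟩ := Function.ne_iff.mp hne
  rw [hshift, ← sum_const_zero]
  exact sum_lt_sum (fun j _ => hf.sub_mul_sub_nonpos (hp j) hc)
    ⟨i, mem_univ i, hf.sub_mul_sub_neg (hp i) hc hi⟩

lemma WL_eq_geom_sum {L : ℕ} (hL : L ≠ 0) (x : ℝ) :
    WL L x = (∑ j ∈ range L, (1 - x) ^ j) / L := by
  unfold WL
  split_ifs with hx
  · simp [hx, hL]
  · rw [← mul_neg_geom_sum, sub_sub_cancel]
    field_simp

lemma strictAntiOn_WL {L : ℕ} (hL : 2 ≤ L) : StrictAntiOn (WL L) (Set.Iic 1) := by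
  intro x _ y hy hxy
  rw [WL_eq_geom_sum (by omega), WL_eq_geom_sum (by omega)]
  have hy' : 0 ≤ 1 - y := sub_nonneg.mpr hy
  gcongr ?_ / _
  exact sum_lt_sum (fun j _ => by gcongr)
    ⟨1, mem_range.mpr hL, by simpa using hxy⟩

lemma le_one_of_mem_simplex {K : ℕ} {p : Fin K → ℝ} (hp : p ∈ simplex K) (i : Fin K) :
    p i ≤ 1 :=
  hp.2 ▸ single_le_sum (fun j _ => hp.1 j) (mem_univ i)

lemma uniform_mem_simplex {K : ℕ} (hK : K ≠ 0) : (fun _ => 1 / (K : ℝ)) ∈ simplex K :=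
  ⟨fun _ => by positivity, by simp [hK]⟩

lemma payoff_const_right {K L : ℕ} (s c : ℝ) {p : Fin K → ℝ} (hp : p ∈ simplex K) :
    payoff K L (fun _ => s) p (fun _ => c) = s * WL L c := by
  simp only [payoff, ← sum_mul, ← mul_sum, hp.2, mul_one]

lemma payoff_self_lt_payoff_uniform {K L : ℕ} (hL : 2 ≤ L) {s : ℝ} (hs : 0 < s)
    {p : Fin K → ℝ} (hp : p ∈ simplex K) (hne : p ≠ fun _ => 1 / (K : ℝ)) :
    payoff K L (fun _ => s) p p < payoff K L (fun _ => s) (fun _ => 1 / (K : ℝ)) p := by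
  have hK : K ≠ 0 := by
    rintro rfl
    simp [simplex] at hp
  have hmean : ∑ i, (p i - 1 / (K : ℝ)) = 0 := by simp [sum_sub_distrib, hp.2, hK]
  have hneg := sum_sub_mul_neg_of_strictAntiOn (strictAntiOn_WL hL) (le_one_of_mem_simplex hp)
    (by simpa [one_div] using Nat.cast_inv_le_one K) hmean hne
  rw [← sub_neg]
  calc payoff K L (fun _ => s) p p - payoff K L (fun _ => s) (fun _ => 1 / (K : ℝ)) p
      = s * ∑ i, (p i - 1 / (K : ℝ)) * WL L (p i) := by
        simp only [payoff, mul_sum, ← sum_sub_distrib]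
        exact sum_congr rfl fun i _ => by ring
    _ < 0 := mul_neg_of_pos_of_neg hs hneg

theorem stmt14 (K L : ℕ) (hK : 2 ≤ K) (hL : 2 ≤ L)
    (s : ℝ) (hs : s ∈ Set.Ioc (0:ℝ) 1) :
    ∀ pstar : Fin K → ℝ,
      IsESS K L (fun _ => s) pstar ↔ pstar = fun _ => 1 / (K:ℝ) := by
  intro pstar
  have hu := uniform_mem_simplex (K := K) (by omega)
  have hpay : ∀ p ∈ simplex K,
      payoff K L (fun _ => s) p (fun _ => 1 / (K : ℝ)) = s * WL L (1 / K) :=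
    fun p hp => payoff_const_right s _ hp
  constructor
  · rintro ⟨hps, hess⟩
    by_contra hne
    have hinvade := payoff_self_lt_payoff_uniform hL hs.1 hps hne
    rcases hess _ hu (Ne.symm hne) with h | ⟨-, h⟩
    · exact lt_asymm h hinvade
    · rw [hpay _ hu, hpay _ hps] at h
      exact lt_irrefl _ h
  · rintro rfl
    exact ⟨hu, fun p hp hne => Or.inr
      ⟨by rw [hpay p hp, hpay _ hu], payoff_self_lt_payoff_uniform hL hs.1 hp hne⟩⟩
end

section
/- For all integers K, L ≥ 2, the equilibrium offer s*(K,L) = L·(K−1)^L / (K^{L+1} − (K−1)^{L−1}·((K−1)·K + L)) satisfies 0 < s*(K,L) < 1. -/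
/-- The subgame-perfect Nash equilibrium offer of the Multi-Proposer-Multi-Responder
Ultimatum Game with `K` proposers and `L` responders. -/
noncomputable def sstar (K L : ℕ) : ℝ :=
  ((L:ℝ) * ((K:ℝ) - 1)^L) /
    ((K:ℝ)^(L+1) - ((K:ℝ) - 1)^(L-1) * (((K:ℝ) - 1) * (K:ℝ) + (L:ℝ)))

lemma key_ineq (m : ℕ) (b : ℝ) (hb : 1 ≤ b) :
    b^(m+2) + ((m:ℝ)+2) * b^(m+1) < (b+1)^(m+2) := by
  induction m with
  | zero => push_cast; nlinarith
  | succ n ih =>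
    have hb0 : (0:ℝ) < b := lt_of_lt_of_le one_pos hb
    have hbp : (0:ℝ) < b ^ (n+1) := pow_pos hb0 _
    have : (b+1) * (b^(n+2) + ((n:ℝ)+2) * b^(n+1)) < (b+1)^(n+3) := by
      calc (b+1) * (b^(n+2) + ((n:ℝ)+2) * b^(n+1))
          < (b+1) * (b+1)^(n+2) := by
            apply mul_lt_mul_of_pos_left ih (by linarith)
        _ = (b+1)^(n+3) := by ring
    have hexp : (b+1) * (b^(n+2) + ((n:ℝ)+2) * b^(n+1))
        = b^(n+3) + ((n:ℝ)+3)*b^(n+2) + ((n:ℝ)+2)*b^(n+1) := by ring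
    have hpos : 0 < ((n:ℝ)+2) * b^(n+1) :=
      mul_pos (by positivity) hbp
    push_cast
    have h3 : (b + 1) ^ (n + 1 + 2) = (b+1)^(n+3) := by ring
    rw [h3]
    linarith

theorem stmt15 (K L : ℕ) (hK : 2 ≤ K) (hL : 2 ≤ L) :
    sstar K L ∈ Set.Ioo (0:ℝ) 1 := by
  obtain ⟨m, rfl⟩ : ∃ m, L = m + 2 := ⟨L - 2, by omega⟩
  set b : ℝ := (K:ℝ) - 1 with hbdef
  have hb : 1 ≤ b := by
    have : (2:ℝ) ≤ (K:ℝ) := by exact_mod_cast hK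
    simp [hbdef]; linarith
  have hb0 : (0:ℝ) < b := lt_of_lt_of_le one_pos hb
  have hK1 : (K:ℝ) = b + 1 := by simp [hbdef]
  have hkey := key_ineq m b hb
  have hkey' : 0 < (b+1)^(m+2) - b^(m+2) - ((m:ℝ)+2) * b^(m+1) := by linarith
  set N : ℝ := ((m:ℝ)+2) * b^(m+2) with hN
  set D : ℝ := (b+1)^(m+3) - b^(m+1) * (b * (b+1) + ((m:ℝ)+2)) with hD
  have hDN : D - N = (b+1) * ((b+1)^(m+2) - b^(m+2) - ((m:ℝ)+2) * b^(m+1)) := by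
    simp only [hD, hN]; ring
  have hNpos : 0 < N := by positivity
  have hDgtN : N < D := by
    nlinarith [mul_pos (show (0:ℝ) < b+1 by linarith) hkey']
  have hDpos : 0 < D := lt_trans hNpos hDgtN
  have hs : sstar K (m+2) = N / D := by
    unfold sstar
    rw [hK1]
    simp only [hN, hD]
    norm_num
  rw [hs]
  constructor
  · positivity
  · rw [div_lt_one hDpos]; exact hDgtN
end

section
/- Let K, L ≥ 2 be integers and set p = 1/K, g = p² / ((1−p)^{L−1}·(L·p + 1 − p) − 1). Then s*(K,L) = L·(K−1)^L / (K^{L+1} − (K−1)^{L−1}·((K−1)·K + L)) is the unique s ∈ (0,1) satisfying the first-order condition (g/s − K·g/s)·(L·(1−p)^{L−1} − (s/p)·(1 − (1−p)^L)) − p = 0, equivalently s = g·(1−K)·L·(1−p)^{L−1} / (g·(1−K)·(1 − (1−p)^L)/p + p). -/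
lemma one_sub_pow_mul_one_add_mul_lt_one {p : ℝ} (hp0 : 0 < p) (hp1 : p ≤ 1) {m : ℕ}
    (hm : m ≠ 0) : (1 - p) ^ m * (1 + m * p) < 1 :=
  calc (1 - p) ^ m * (1 + m * p) ≤ (1 - p) ^ m * (1 + p) ^ m := by
        gcongr
        exact one_add_mul_le_pow (by linarith) m
    _ = (1 - p ^ 2) ^ m := by rw [← mul_pow]; ring
    _ < 1 := pow_lt_one₀ (by nlinarith) (by nlinarith) hm

lemma div_sub_mul_sub_eq_zero_iff {c A C p s : ℝ} (hp : p ≠ 0) (hs : s ≠ 0)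
    (hD : c * (C / p) + p ≠ 0) :
    c / s * (A - s / p * C) - p = 0 ↔ s = c * A / (c * (C / p) + p) := by
  have h : c / s * (A - s / p * C) - p = (c * A - s * (c * (C / p) + p)) / s := by
    field_simp
    ring
  rw [h, div_eq_zero_iff, or_iff_left hs, sub_eq_zero, eq_div_iff hD, eq_comm]

section

variable {p E : ℝ} {m : ℕ}

lemma sstar_succ_eq {K : ℕ} (hK : K ≠ 0) (hp : p = 1 / K)
    (hE : E = 1 - (1 - p) ^ m * (1 + m * p)) :
    sstar K (m + 1) =
      (m + 1) * p * (1 - p) ^ (m + 1) / ((m + 1) * p * (1 - p) ^ (m + 1) + E) := by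
  have hK' : (K : ℝ) ≠ 0 := Nat.cast_ne_zero.mpr hK
  have hq : 1 - p = (K - 1) / K := by rw [hp]; field_simp
  conv_rhs => rw [← mul_div_mul_left _ _ (pow_ne_zero (m + 2) hK')]
  rw [sstar, Nat.add_sub_cancel, hE, hq, hp]
  simp only [div_pow]
  push_cast
  congr 1 <;> field_simp <;> ring

lemma g_mul_one_sub_eq {K g : ℝ} (hK : K ≠ 0) (hp : p = 1 / K)
    (hE : E = 1 - (1 - p) ^ m * (1 + m * p)) (hE0 : E ≠ 0)
    (hg : g = p ^ 2 / ((1 - p) ^ m * ((m + 1) * p + 1 - p) - 1)) :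
    g * (1 - K) = p * (1 - p) / E := by
  have hden : (1 - p) ^ m * ((m + 1) * p + 1 - p) - 1 = -E := by rw [hE]; ring
  rw [hg, hden, hp]
  field_simp
  ring

lemma foc_denom_eq {c : ℝ} (hp : p ≠ 0) (hE : E = 1 - (1 - p) ^ m * (1 + m * p))
    (hE0 : E ≠ 0) (hc : c = p * (1 - p) / E) :
    c * ((1 - (1 - p) ^ (m + 1)) / p) + p = ((m + 1) * p * (1 - p) ^ (m + 1) + E) / E := by
  rw [hc]
  field_simp
  rw [hE]
  ring

lemma foc_solution_eq {c : ℝ} (hp : p ≠ 0) (hE : E = 1 - (1 - p) ^ m * (1 + m * p))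
    (hE0 : E ≠ 0) (hc : c = p * (1 - p) / E) :
    c * ((m + 1) * (1 - p) ^ m) / (c * ((1 - (1 - p) ^ (m + 1)) / p) + p) =
      (m + 1) * p * (1 - p) ^ (m + 1) / ((m + 1) * p * (1 - p) ^ (m + 1) + E) := by
  have hnum : c * ((m + 1) * (1 - p) ^ m) = (m + 1) * p * (1 - p) ^ (m + 1) / E := by
    rw [hc]
    field_simp
    ring
  rw [hnum, foc_denom_eq hp hE hE0 hc, div_div_div_cancel_right₀ hE0]

end

theorem stmt16 (K L : ℕ) (hK : 2 ≤ K) (hL : 2 ≤ L)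
    (p g : ℝ) (hp : p = 1 / (K:ℝ))
    (hg : g = p^2 / ((1-p)^(L-1) * ((L:ℝ) * p + 1 - p) - 1)) :
    sstar K L ∈ Set.Ioo (0:ℝ) 1 ∧
    (∀ s ∈ Set.Ioo (0:ℝ) 1,
      ((g / s - (K:ℝ) * g / s) *
          ((L:ℝ) * (1-p)^(L-1) - (s / p) * (1 - (1-p)^L)) - p = 0
        ↔ s = sstar K L)) ∧
    sstar K L =
      g * (1 - (K:ℝ)) * (L:ℝ) * (1-p)^(L-1) /
        (g * (1 - (K:ℝ)) * ((1 - (1-p)^L) / p) + p) := by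
  obtain ⟨m, rfl⟩ : ∃ m, L = m + 1 := ⟨L - 1, by omega⟩
  rw [Nat.add_sub_cancel] at hg ⊢
  push_cast at hg ⊢
  have hK2 : (2 : ℝ) ≤ K := by exact_mod_cast hK
  have hp0 : 0 < p := by rw [hp]; positivity
  have hp1 : p < 1 := by rw [hp, div_lt_one (by linarith)]; linarith
  set E := 1 - (1 - p) ^ m * (1 + m * p) with hE
  have hE0 : 0 < E := sub_pos.mpr (one_sub_pow_mul_one_add_mul_lt_one hp0 hp1.le (by omega))
  have hN : 0 < (m + 1) * p * (1 - p) ^ (m + 1) := by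
    have : 0 < 1 - p := by linarith
    positivity
  have hc := g_mul_one_sub_eq (by positivity) hp hE hE0.ne' hg
  have hsstar := sstar_succ_eq (by omega) hp hE
  have hsol := foc_solution_eq hp0.ne' hE hE0.ne' hc
  refine ⟨?_, fun s hs => ?_, ?_⟩
  · rw [hsstar]
    exact ⟨div_pos hN (by linarith), (div_lt_one (by linarith)).mpr (by linarith)⟩
  · have hD : 0 < g * (1 - K) * ((1 - (1 - p) ^ (m + 1)) / p) + p := by
      rw [foc_denom_eq hp0.ne' hE hE0.ne' hc]
      exact div_pos (by linarith) hE0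
    rw [show g / s - K * g / s = g * (1 - K) / s by ring, div_sub_mul_sub_eq_zero_iff hp0.ne'
      hs.1.ne' hD.ne', hsol, hsstar]
  · rw [mul_assoc (g * (1 - K)), hsol, hsstar]
end

section
/- Let c > 0 be real and let (K_L) be a sequence of integers with K_L ≥ 2 and K_L/L → c as L → ∞. Then s*(K_L, L) → 1/(c·(e^{1/c} − 1)) as L → ∞. -/
open Filter Topology Real

lemma sstar_eq_div {K L : ℕ} (hK : K ≠ 0) (hL : L ≠ 0) :
    sstar K L = (1 - (K : ℝ)⁻¹) ^ L /
      (K / L - (1 - (K : ℝ)⁻¹) ^ (L - 1) * (K / L - (L : ℝ)⁻¹ + (K : ℝ)⁻¹)) := by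
  obtain ⟨m, rfl⟩ : ∃ m, L = m + 1 := Nat.exists_eq_add_one.2 (Nat.pos_of_ne_zero hL)
  have hK' : (K : ℝ) ≠ 0 := by exact_mod_cast hK
  have hfrac : 1 - (K : ℝ)⁻¹ = (K - 1) / K := by field_simp
  rw [sstar, hfrac, div_pow, div_pow, Nat.add_sub_cancel]
  field_simp
  ring

lemma tendsto_atTop_of_div_tendsto_pos {α : Type*} {l : Filter α} {u v : α → ℝ} {c : ℝ}
    (hc : 0 < c) (hv : Tendsto v l atTop) (huv : Tendsto (fun a => u a / v a) l (𝓝 c)) :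
    Tendsto u l atTop := by
  refine (hv.atTop_mul_pos hc huv).congr' ?_
  filter_upwards [hv.eventually_gt_atTop 0] with a ha
  field_simp

lemma tendsto_one_sub_inv_pow {α : Type*} {l : Filter α} {x : α → ℝ} {n : α → ℕ} {t : ℝ}
    (hx : Tendsto x l atTop) (hn : Tendsto (fun a => n a / x a) l (𝓝 t)) :
    Tendsto (fun a => (1 - (x a)⁻¹) ^ n a) l (𝓝 (exp (-t))) := by
  have hlog : Tendsto (fun a => x a * log (1 - (x a)⁻¹)) l (𝓝 (-1)) := by
    simpa [Function.comp_def, neg_div, sub_eq_add_neg] using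
      (tendsto_mul_log_one_add_div_atTop (-1)).comp hx
  have hexp := (continuous_exp.tendsto _).comp (by simpa using hn.mul hlog)
  refine hexp.congr' ?_
  filter_upwards [hx.eventually_gt_atTop 1] with a ha
  have hpos : 0 < 1 - (x a)⁻¹ := sub_pos.2 (inv_lt_one_of_one_lt₀ ha)
  have hx0 : x a ≠ 0 := by positivity
  rw [Function.comp_apply, ← mul_assoc, div_mul_cancel₀ _ hx0, ← log_pow, exp_log (pow_pos hpos _)]

theorem stmt17_general (c : ℝ) (hc : 0 < c) (K : ℕ → ℕ)
    (hlim : Filter.Tendsto (fun L : ℕ => (K L : ℝ) / (L:ℝ)) Filter.atTop (nhds c)) :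
    Filter.Tendsto (fun L : ℕ => sstar (K L) L) Filter.atTop
      (nhds (1 / (c * (Real.exp (1/c) - 1)))) := by
  have hK : Tendsto (fun L => (K L : ℝ)) atTop atTop :=
    tendsto_atTop_of_div_tendsto_pos hc tendsto_natCast_atTop_atTop hlim
  have hKinv : Tendsto (fun L => (K L : ℝ)⁻¹) atTop (𝓝 0) := tendsto_inv_atTop_zero.comp hK
  have hLK : Tendsto (fun L : ℕ => (L : ℝ) / K L) atTop (𝓝 c⁻¹) := by
    simpa only [inv_div] using hlim.inv₀ hc.ne'
  have hpredK : Tendsto (fun L : ℕ => ((L - 1 : ℕ) : ℝ) / K L) atTop (𝓝 c⁻¹) := by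
    have h := hLK.sub hKinv
    rw [sub_zero] at h
    refine h.congr' ?_
    filter_upwards [eventually_ge_atTop 1] with L hL
    rw [Nat.cast_sub hL, sub_div, Nat.cast_one, one_div]
  have hden : Tendsto (fun L : ℕ => (K L : ℝ) / L -
      (1 - (K L : ℝ)⁻¹) ^ (L - 1) * (K L / L - (L : ℝ)⁻¹ + (K L : ℝ)⁻¹)) atTop
      (𝓝 (c * (1 - exp (-c⁻¹)))) := by
    convert hlim.sub ((tendsto_one_sub_inv_pow hK hpredK).mul
      ((hlim.sub tendsto_inv_atTop_nhds_zero_nat).add hKinv)) using 2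
    ring
  have hden0 : c * (1 - exp (-c⁻¹)) ≠ 0 := by
    have : exp (-c⁻¹) < 1 := exp_lt_one_iff.2 (by simpa using hc)
    positivity
  convert ((tendsto_one_sub_inv_pow hK hLK).div hden hden0).congr' ?_ using 2
  · have : exp c⁻¹ - 1 ≠ 0 := sub_ne_zero.2 (one_lt_exp_iff.2 (by positivity)).ne'
    rw [exp_neg, one_div]
    field_simp
  · filter_upwards [hK.eventually_gt_atTop 0, eventually_ne_atTop 0] with L hKL hL
    exact (sstar_eq_div (by exact_mod_cast hKL.ne') hL).symm

theorem stmt17 (c : ℝ) (hc : 0 < c) (K : ℕ → ℕ) (hK : ∀ L, 2 ≤ K L)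
    (hlim : Filter.Tendsto (fun L : ℕ => (K L : ℝ) / (L:ℝ)) Filter.atTop (nhds c)) :
    Filter.Tendsto (fun L : ℕ => sstar (K L) L) Filter.atTop
      (nhds (1 / (c * (Real.exp (1/c) - 1)))) :=
  stmt17_general c hc K hlim
end

section
/- There exists a unique real c > 0 such that the limiting proposer and responder payoffs coincide, i.e. 1 − (c + 1)/(c·e^{1/c}) = e^{−1/c}, equivalently (2 + 1/c)·e^{−1/c} = 1; moreover this unique 'equity ratio' c lies in the open interval (1/2, 1). -/
open Real

private noncomputable def fug : ℝ → ℝ := fun t => Real.exp t - t - 2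

private lemma fug_mono : StrictMonoOn fug (Set.Ici 0) := by
  apply strictMonoOn_of_deriv_pos (convex_Ici 0)
  · have : Continuous fug := by unfold fug; continuity
    exact this.continuousOn
  · intro x hx
    rw [interior_Ici] at hx
    have : deriv fug x = Real.exp x - 1 := by
      unfold fug
      simp [Real.deriv_exp]
    rw [this]
    have : 1 < Real.exp x := by
      rw [← Real.exp_zero]
      exact Real.exp_lt_exp.2 hx
    linarith

private lemma fug1 : fug 1 < 0 := by
  have := Real.exp_one_lt_d9
  unfold fug; linarith

private lemma fug2 : 0 < fug 2 := by
  have h := Real.exp_one_gt_d9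
  have : Real.exp 2 = Real.exp 1 * Real.exp 1 := by
    rw [← Real.exp_add]; norm_num
  unfold fug; nlinarith

private lemma fug_root : ∃ t ∈ Set.Ioo (1:ℝ) 2, fug t = 0 := by
  have hcf : Continuous fug := by unfold fug; continuity
  have hcont : ContinuousOn fug (Set.Icc 1 2) := hcf.continuousOn
  have := intermediate_value_Ioo (by norm_num : (1:ℝ) ≤ 2) hcont
  have h0 : (0:ℝ) ∈ Set.Ioo (fug 1) (fug 2) := ⟨fug1, fug2⟩
  obtain ⟨t, ht, hft⟩ := this h0
  exact ⟨t, ht, hft⟩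

private lemma eqB_iff_fug (c : ℝ) (hc : 0 < c) :
    (2 + 1/c) * Real.exp (-(1/c)) = 1 ↔ fug (1/c) = 0 := by
  have hE := Real.exp_pos (1/c)
  rw [Real.exp_neg]
  unfold fug
  constructor
  · intro h
    have : 2 + 1/c = Real.exp (1/c) := by
      field_simp at h ⊢; linear_combination h
    linarith
  · intro h
    have : Real.exp (1/c) = 2 + 1/c := by linarith
    rw [this]
    field_simp

private lemma eqA_iff_eqB (c : ℝ) (hc : 0 < c) :
    1 - (c + 1) / (c * Real.exp (1/c)) = Real.exp (-(1/c)) ↔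
      (2 + 1/c) * Real.exp (-(1/c)) = 1 := by
  have hE := Real.exp_pos (1/c)
  have hc0 : c ≠ 0 := ne_of_gt hc
  rw [Real.exp_neg]
  rw [sub_eq_iff_eq_add]
  constructor
  · intro h
    field_simp at h ⊢
    nlinarith
  · intro h
    field_simp at h ⊢
    nlinarith

theorem stmt19 :
    (∃! c : ℝ, 0 < c ∧
      1 - (c + 1) / (c * Real.exp (1/c)) = Real.exp (-(1/c))) ∧
    (∀ c : ℝ, 0 < c →
      (1 - (c + 1) / (c * Real.exp (1/c)) = Real.exp (-(1/c)) ↔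
        (2 + 1/c) * Real.exp (-(1/c)) = 1)) ∧
    (∀ c : ℝ, 0 < c →
      1 - (c + 1) / (c * Real.exp (1/c)) = Real.exp (-(1/c)) →
      c ∈ Set.Ioo (1/2 : ℝ) 1) := by
  obtain ⟨t, ⟨ht1, ht2⟩, hft⟩ := fug_root
  have ht0 : 0 < t := by linarith
  refine ⟨⟨1/t, ⟨by positivity, ?_⟩, ?_⟩, fun c hc => eqA_iff_eqB c hc, ?_⟩
  · rw [eqA_iff_eqB _ (by positivity), eqB_iff_fug _ (by positivity)]
    rw [one_div_one_div]
    exact hft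
  · rintro c ⟨hc, hA⟩
    rw [eqA_iff_eqB c hc, eqB_iff_fug c hc] at hA
    have h1 : (1/c : ℝ) ∈ Set.Ici (0:ℝ) := by
      simp; positivity
    have h2 : t ∈ Set.Ici (0:ℝ) := le_of_lt ht0
    have := fug_mono.injOn h1 h2 (by rw [hA, hft])
    rw [← this, one_div_one_div]
  · intro c hc hA
    rw [eqA_iff_eqB c hc, eqB_iff_fug c hc] at hA
    have h1 : (1/c : ℝ) ∈ Set.Ici (0:ℝ) := by simp; positivity
    have hlt1 : fug 1 < fug (1/c) := by rw [hA]; exact fug1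
    have hlt2 : fug (1/c) < fug 2 := by rw [hA]; exact fug2
    have hb1 : (1:ℝ) < 1/c := by
      by_contra h
      push_neg at h
      exact absurd (fug_mono.monotoneOn h1 (by norm_num) h) (not_le.2 hlt1)
    have hb2 : (1/c : ℝ) < 2 := by
      by_contra h
      push_neg at h
      exact absurd (fug_mono.monotoneOn (by norm_num) h1 h) (not_le.2 hlt2)
    have hcc : c * (1/c) = 1 := mul_one_div_cancel (ne_of_gt hc)
    constructor
    · nlinarith
    · nlinarith
end
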